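/- Every pseudocompact topological space has the Baire property. -/

import Mathlib

/-!
Given dense open sets `U n` and a nonempty open `W`, regularity yields nonempty open sets
`W = A 0 ⊇ A 1 ⊇ ⋯` with `closure (A (n + 1)) ⊆ A n ∩ U n`. If the closures had empty
intersection, the sequence `A` would be locally finite; bump functions `fₙ` with `fₙ (xₙ) = 1`
and support in `A n` would then add up to the continuous function `∑ n • fₙ`, which is
unbounded. So some point lies in every closure, hence in `W ∩ ⋂ n, U n`.
-/

open Set Function

section

variable {X : Type*} [TopologicalSpace X]

theorem Antitone.locallyFinite_of_iInter_closure_eq_empty {A : ℕ → Set X} (hA : Antitone A)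
    (h : ⋂ n, closure (A n) = ∅) : LocallyFinite A := by
  intro x
  obtain ⟨N, hN⟩ : ∃ N, x ∉ closure (A N) := by
    simpa only [mem_iInter, not_forall] using (eq_empty_iff_forall_notMem.1 h) x
  refine ⟨(closure (A N))ᶜ, isClosed_closure.isOpen_compl.mem_nhds hN,
    (finite_Iio N).subset fun n ⟨y, hyA, hyN⟩ => ?_⟩
  by_contra hn
  exact hyN (subset_closure (hA (not_lt.1 hn) hyA))

theorem Dense.exists_isOpen_nonempty_closure_subset_inter [RegularSpace X] {U V : Set X}
    (hU : Dense U) (hUo : IsOpen U) (hVo : IsOpen V) (hV : V.Nonempty) :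
    ∃ W, IsOpen W ∧ W.Nonempty ∧ closure W ⊆ V ∩ U := by
  obtain ⟨x, hx⟩ := hU.inter_open_nonempty V hVo hV
  obtain ⟨W, hWo, hxW, hWVU⟩ :=
    (isCompact_singleton (x := x)).exists_isOpen_closure_subset
      (by rw [nhdsSet_singleton]; exact (hVo.inter hUo).mem_nhds hx)
  exact ⟨W, hWo, ⟨x, singleton_subset_iff.1 hxW⟩, hWVU⟩

theorem BaireSpace.of_forall_not_locallyFinite [RegularSpace X]
    (h : ∀ A : ℕ → Set X, (∀ n, IsOpen (A n)) → (∀ n, (A n).Nonempty) →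
      ¬LocallyFinite A) :
    BaireSpace X := by
  refine ⟨fun U hUo hUd => dense_iff_inter_open.2 fun W hWo hW => ?_⟩
  have shrink : ∀ n (V : {V : Set X // IsOpen V ∧ V.Nonempty}),
      ∃ V' : {V : Set X // IsOpen V ∧ V.Nonempty}, closure V'.1 ⊆ V.1 ∩ U n := by
    rintro n ⟨V, hVo, hV⟩
    obtain ⟨V', hV'o, hV', hV'V⟩ :=
      (hUd n).exists_isOpen_nonempty_closure_subset_inter (hUo n) hVo hV
    exact ⟨⟨V', hV'o, hV'⟩, hV'V⟩
  choose next hnext using shrink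
  let A : ℕ → {V : Set X // IsOpen V ∧ V.Nonempty} := fun n => Nat.rec ⟨W, hWo, hW⟩ next n
  have hclosure : ∀ n, closure (A (n + 1)).1 ⊆ (A n).1 ∩ U n := fun n => hnext n (A n)
  have hanti : Antitone fun n => (A (n + 1)).1 := antitone_nat_of_succ_le fun n =>
    subset_closure.trans ((hclosure (n + 1)).trans inter_subset_left)
  obtain ⟨x, hx⟩ : (⋂ n, closure (A (n + 1)).1).Nonempty :=
    nonempty_iff_ne_empty.2 fun hempty => h _ (fun n => (A (n + 1)).2.1) (fun n => (A (n + 1)).2.2)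
      (hanti.locallyFinite_of_iInter_closure_eq_empty hempty)
  rw [mem_iInter] at hx
  exact ⟨x, (hclosure 0 (hx 0)).1, mem_iInter.2 fun n => (hclosure n (hx n)).2⟩

theorem exists_continuous_nonneg_eq_one_support_subset [CompletelyRegularSpace X] {U : Set X}
    (hU : IsOpen U) {x : X} (hx : x ∈ U) :
    ∃ f : X → ℝ, Continuous f ∧ 0 ≤ f ∧ f x = 1 ∧ support f ⊆ U := by
  obtain ⟨g, hgc, hgx, hgU⟩ := CompletelyRegularSpace.completely_regular_isOpen x U hU hx
  refine ⟨fun y => (unitInterval.symm (g y) : ℝ),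
    continuous_subtype_val.comp (unitInterval.continuous_symm.comp hgc),
    fun y => (unitInterval.symm (g y)).2.1, by simp [hgx], fun y hy => ?_⟩
  by_contra hyU
  exact hy (by simp [hgU hyU])

theorem not_locallyFinite_of_forall_abs_le [CompletelyRegularSpace X]
    (hbdd : ∀ f : X → ℝ, Continuous f → ∃ M : ℝ, ∀ x, |f x| ≤ M) {A : ℕ → Set X}
    (hAo : ∀ n, IsOpen (A n)) (hA : ∀ n, (A n).Nonempty) : ¬LocallyFinite A := by
  intro hlf
  choose x hx using hA
  choose f hfc hf0 hf1 hfA using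
    fun n => exists_continuous_nonneg_eq_one_support_subset (hAo n) (hx n)
  have hlf' : LocallyFinite fun n : ℕ => support fun y => (n : ℝ) * f n y :=
    hlf.subset fun n => (support_mul_subset_right _ _).trans (hfA n)
  obtain ⟨M, hM⟩ := hbdd (fun y => ∑ᶠ n : ℕ, (n : ℝ) * f n y)
    (continuous_finsum (fun n : ℕ => continuous_const.mul (hfc n)) hlf')
  obtain ⟨n, hMn⟩ := exists_nat_gt M
  have hn : (n : ℝ) ≤ ∑ᶠ k : ℕ, (k : ℝ) * f k (x n) := by
    simpa [hf1 n] using single_le_finsum n (hlf'.point_finite (x n))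
      fun k => mul_nonneg k.cast_nonneg (hf0 k (x n))
  linarith [le_abs_self (∑ᶠ k : ℕ, (k : ℝ) * f k (x n)), hM (x n)]

end

theorem stmt13_general {X : Type*} [TopologicalSpace X] [CompletelyRegularSpace X]
    (hpseudo : ∀ f : X → ℝ, Continuous f → ∃ M : ℝ, ∀ x, |f x| ≤ M) :
    BaireSpace X :=
  .of_forall_not_locallyFinite fun _ hAo hA => not_locallyFinite_of_forall_abs_le hpseudo hAo hA

/-- Every pseudocompact Tychonoff space has the Baire property. -/
theorem stmt13 {X : Type*} [TopologicalSpace X] [T2Space X] [CompletelyRegularSpace X]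
    (hpseudo : ∀ f : X → ℝ, Continuous f → ∃ M : ℝ, ∀ x, |f x| ≤ M) :
    BaireSpace X :=
  stmt13_general hpseudo
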